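/- Let S₆ = {((x:y:z),(u:v:w)) ∈ ℙ²×ℙ² : ux = vy = wz}. The map κ_{α,β}: ((x:y:z),(u:v:w)) ↦ ((u:αw:βv),(x:α⁻¹z:β⁻¹y)) is an automorphism of S₆ for all α,β ∈ ℂ*, its square is ((x:y:z),(u:v:w)) ↦ ((x:αβ⁻¹y:α⁻¹βz),(u:α⁻¹βv:αβ⁻¹w)), and κ_{α,β} is an involution if and only if α = β. -/

import Mathlib

noncomputable section

/-- A pair of nonzero vectors `(p,q)` represents a point of the del Pezzo surface
`S₆ = {((x:y:z),(u:v:w)) ∈ ℙ²×ℙ² : ux = vy = wz}` iff `p₀q₀ = p₁q₁ = p₂q₂`. -/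
def S6cond (p q : Fin 3 → ℂ) : Prop :=
  p 0 * q 0 = p 1 * q 1 ∧ p 1 * q 1 = p 2 * q 2

/-- First component of `κ_{α,β} : ((x:y:z),(u:v:w)) ↦ ((u:αw:βv),(x:α⁻¹z:β⁻¹y))`. -/
def kap1 (α β : ℂ) (p q : Fin 3 → ℂ) : Fin 3 → ℂ := ![q 0, α * q 2, β * q 1]

/-- Second component of `κ_{α,β}`. -/
def kap2 (α β : ℂ) (p q : Fin 3 → ℂ) : Fin 3 → ℂ := ![p 0, α⁻¹ * p 2, β⁻¹ * p 1]

/-! The proof is coordinate bookkeeping around one identity: `κ_{α,β} ∘ κ_{γ,δ}` is the torus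
element `((x:y:z),(u:v:w)) ↦ ((x:αδ⁻¹y:βγ⁻¹z),(u:α⁻¹δv:β⁻¹γw))`. Taking `(γ,δ) = (β,α)` shows
that `κ_{β,α}` inverts `κ_{α,β}`, and `(γ,δ) = (α,β)` gives the square. At `((1:1:1),(1:1:1))`
the square fixes the point only if `α = β`, while `κ_{α,β}` never fixes `((1:0:0),(0:1:0))`. -/

variable {α β γ δ : ℂ} {p q : Fin 3 → ℂ}

theorem kap2_eq_kap1 : kap2 α β p q = kap1 α⁻¹ β⁻¹ q p := rfl

theorem kap1_ne_zero (hα : α ≠ 0) (hβ : β ≠ 0) (hq : q ≠ 0) : kap1 α β p q ≠ 0 := by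
  contrapose! hq
  have h₀ := congrFun hq 0
  have h₁ := congrFun hq 1
  have h₂ := congrFun hq 2
  simp [kap1, hα, hβ] at h₀ h₁ h₂
  ext i
  fin_cases i <;> assumption

theorem kap2_ne_zero (hα : α ≠ 0) (hβ : β ≠ 0) (hp : p ≠ 0) : kap2 α β p q ≠ 0 := by
  rw [kap2_eq_kap1]
  exact kap1_ne_zero (inv_ne_zero hα) (inv_ne_zero hβ) hp

theorem S6cond_kap (hα : α ≠ 0) (hβ : β ≠ 0) (h : S6cond p q) :
    S6cond (kap1 α β p q) (kap2 α β p q) := by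
  obtain ⟨h₀₁, h₁₂⟩ := h
  constructor <;> simp only [kap1, kap2, Matrix.cons_val] <;> field_simp
  · linear_combination h₀₁ + h₁₂
  · linear_combination -h₁₂

theorem kap1_kap (p q : Fin 3 → ℂ) :
    kap1 α β (kap1 γ δ p q) (kap2 γ δ p q) = ![p 0, α * δ⁻¹ * p 1, β * γ⁻¹ * p 2] := by
  ext i; fin_cases i <;> simp [kap1, kap2, mul_assoc]

theorem kap2_kap (p q : Fin 3 → ℂ) :
    kap2 α β (kap1 γ δ p q) (kap2 γ δ p q) = ![q 0, α⁻¹ * δ * q 1, β⁻¹ * γ * q 2] := by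
  ext i; fin_cases i <;> simp [kap1, kap2, mul_assoc]

theorem kap1_kap_swap (hα : α ≠ 0) (hβ : β ≠ 0) (p q : Fin 3 → ℂ) :
    kap1 α β (kap1 β α p q) (kap2 β α p q) = p := by
  rw [kap1_kap, mul_inv_cancel₀ hα, mul_inv_cancel₀ hβ]
  ext i; fin_cases i <;> simp

theorem kap2_kap_swap (hα : α ≠ 0) (hβ : β ≠ 0) (p q : Fin 3 → ℂ) :
    kap2 α β (kap1 β α p q) (kap2 β α p q) = q := by
  rw [kap2_kap, inv_mul_cancel₀ hα, inv_mul_cancel₀ hβ]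
  ext i; fin_cases i <;> simp

theorem kap1_sq (p q : Fin 3 → ℂ) :
    kap1 α β (kap1 α β p q) (kap2 α β p q) = ![p 0, α * β⁻¹ * p 1, α⁻¹ * β * p 2] := by
  rw [kap1_kap, mul_comm β]

theorem kap2_sq (p q : Fin 3 → ℂ) :
    kap2 α β (kap1 α β p q) (kap2 α β p q) = ![q 0, α⁻¹ * β * q 1, α * β⁻¹ * q 2] := by
  rw [kap2_kap, mul_comm β⁻¹]

theorem eq_of_kap1_sq_one_eq_smul (hβ : β ≠ 0) {lam : ℂ}
    (h : kap1 α β (kap1 α β 1 1) (kap2 α β 1 1) = lam • 1) : α = β := by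
  rw [kap1_sq] at h
  have h₀ := congrFun h 0
  have h₁ := congrFun h 1
  simp only [Pi.smul_apply, Pi.one_apply, Matrix.cons_val, mul_one, smul_eq_mul] at h₀ h₁
  rwa [← h₀, ← div_eq_mul_inv, div_eq_one_iff_eq hβ] at h₁

theorem kap1_ne_smul_single (hβ : β ≠ 0) (lam : ℂ) :
    kap1 α β (Pi.single 0 1) (Pi.single 1 1) ≠ lam • Pi.single 0 1 := by
  intro h
  simpa [kap1, hβ] using congrFun h 2

theorem S6cond_one : S6cond 1 1 := ⟨rfl, rfl⟩

theorem S6cond_single : S6cond (Pi.single 0 1) (Pi.single 1 1) := by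
  constructor <;> simp

/-- `κ_{α,β}` is an automorphism of `S₆` (it maps `S₆` onto `S₆`), its square is
`((x:y:z),(u:v:w)) ↦ ((x:αβ⁻¹y:α⁻¹βz),(u:α⁻¹βv:αβ⁻¹w))`, and it is an involution
if and only if `α = β`. -/
theorem stmt_12 (α β : ℂ) (hα : α ≠ 0) (hβ : β ≠ 0) :
    -- κ maps S₆ into S₆
    (∀ p q : Fin 3 → ℂ, p ≠ 0 → q ≠ 0 → S6cond p q →
      kap1 α β p q ≠ 0 ∧ kap2 α β p q ≠ 0 ∧ S6cond (kap1 α β p q) (kap2 α β p q)) ∧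
    -- κ is surjective on S₆ (up to scalars), hence an automorphism of S₆
    (∀ p q : Fin 3 → ℂ, p ≠ 0 → q ≠ 0 → S6cond p q →
      ∃ p' q' : Fin 3 → ℂ, p' ≠ 0 ∧ q' ≠ 0 ∧ S6cond p' q' ∧
        (∃ lam : ℂ, lam ≠ 0 ∧ kap1 α β p' q' = lam • p) ∧
        (∃ mu : ℂ, mu ≠ 0 ∧ kap2 α β p' q' = mu • q)) ∧
    -- the formula for κ²
    (∀ p q : Fin 3 → ℂ,
      kap1 α β (kap1 α β p q) (kap2 α β p q) = ![p 0, α * β⁻¹ * p 1, α⁻¹ * β * p 2] ∧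
      kap2 α β (kap1 α β p q) (kap2 α β p q) = ![q 0, α⁻¹ * β * q 1, α * β⁻¹ * q 2]) ∧
    -- κ is an involution (κ² = id on S₆ and κ ≠ id on S₆) iff α = β
    (((∀ p q : Fin 3 → ℂ, p ≠ 0 → q ≠ 0 → S6cond p q →
        (∃ lam : ℂ, lam ≠ 0 ∧ kap1 α β (kap1 α β p q) (kap2 α β p q) = lam • p) ∧
        (∃ mu : ℂ, mu ≠ 0 ∧ kap2 α β (kap1 α β p q) (kap2 α β p q) = mu • q)) ∧
      ¬ (∀ p q : Fin 3 → ℂ, p ≠ 0 → q ≠ 0 → S6cond p q →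
        (∃ lam : ℂ, lam ≠ 0 ∧ kap1 α β p q = lam • p) ∧
        (∃ mu : ℂ, mu ≠ 0 ∧ kap2 α β p q = mu • q))) ↔ α = β) := by
  refine ⟨fun p q hp hq hS ↦ ?_, fun p q hp hq hS ↦ ?_,
    fun p q ↦ ⟨kap1_sq p q, kap2_sq p q⟩, ?_, ?_⟩
  · exact ⟨kap1_ne_zero hα hβ hq, kap2_ne_zero hα hβ hp, S6cond_kap hα hβ hS⟩
  · refine ⟨kap1 β α p q, kap2 β α p q, kap1_ne_zero hβ hα hq, kap2_ne_zero hβ hα hp,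
      S6cond_kap hβ hα hS, ⟨1, one_ne_zero, ?_⟩, ⟨1, one_ne_zero, ?_⟩⟩
    · rw [kap1_kap_swap hα hβ, one_smul]
    · rw [kap2_kap_swap hα hβ, one_smul]
  · rintro ⟨hsq, -⟩
    obtain ⟨⟨lam, -, h⟩, -⟩ := hsq 1 1 one_ne_zero one_ne_zero S6cond_one
    exact eq_of_kap1_sq_one_eq_smul hβ h
  · rintro rfl
    refine ⟨fun p q _ _ _ ↦ ⟨⟨1, one_ne_zero, ?_⟩, ⟨1, one_ne_zero, ?_⟩⟩, fun hid ↦ ?_⟩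
    · rw [kap1_kap_swap hα hα, one_smul]
    · rw [kap2_kap_swap hα hα, one_smul]
    · obtain ⟨⟨lam, -, h⟩, -⟩ := hid _ _ (Pi.single_ne_zero_iff.mpr one_ne_zero)
        (Pi.single_ne_zero_iff.mpr one_ne_zero) S6cond_single
      exact kap1_ne_smul_single hα lam h

end
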